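/- The non-parametric Hamilton–Jacobi constraints vanish identically on integral elements: let L : Mat_{M×(n+1)}(ℝ) → ℝ be differentiable, let P ∈ Mat_{M×(n+1)}(ℝ) and let X be a real (n+1)×n matrix. Define π_i = Σ_{j=0}^n (∂L/∂P_{ij})(P) · w_j(X) for i = 1,…,M, and H_j = Σ_{j'≠j} ( Σ_{i=1}^M (∂L/∂P_{ij'})(P) · P_{ij} ) · w_{j'}(X) + ( Σ_{i=1}^M (∂L/∂P_{ij})(P) · P_{ij} − L(P) ) · w_j(X) for j = 0,…,n. Then for every k ∈ {1,…,n}, Σ_{i=1}^M π_i · (P·X)_{ik} = Σ_{j=0}^n H_j · X_{jk}. -/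

import Mathlib

attribute [local instance] Matrix.normedAddCommGroup Matrix.normedSpace

/-- The signed maximal minor vector of a real `(n+1) × n` matrix `X`:
`w_j(X) = (−1)^j det X⁽ʲ⁾`, where `X⁽ʲ⁾` is obtained from `X` by deleting
its `j`-th row. -/
noncomputable def signedMinor {n : ℕ} (X : Matrix (Fin (n + 1)) (Fin n) ℝ)
    (j : Fin (n + 1)) : ℝ :=
  (-1 : ℝ) ^ (j : ℕ) * (X.submatrix j.succAbove id).det

/-!
Writing `w = signedMinor X` and `D_{ij} = (∂L/∂P_{ij})(P)`, the momenta are `π = D w` and the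
Hamiltonian densities are `H = (Dᵀ P)ᵀ w − L(P) w`. Hence `πᵀ (P X) = wᵀ Dᵀ P X` and
`Hᵀ X = wᵀ Dᵀ P X − L(P) wᵀ X`, and the last term vanishes: `w ⬝ᵥ v` is the Laplace expansion along
the first column of the matrix `X` bordered by the column `v`, and this determinant is zero when
`v` is itself a column of `X`.
-/

open Matrix

lemma signedMinor_dotProduct_eq_det {n : ℕ} (X : Matrix (Fin (n + 1)) (Fin n) ℝ)
    (v : Fin (n + 1) → ℝ) :
    signedMinor X ⬝ᵥ v = (Matrix.of fun j => Fin.cons (v j) (X j)).det := by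
  rw [det_succ_column_zero, dotProduct]
  refine Finset.sum_congr rfl fun j _ => ?_
  have hsub : (Matrix.of fun j => (Fin.cons (v j) (X j) : Fin (n + 1) → ℝ)).submatrix
      j.succAbove Fin.succ = X.submatrix j.succAbove id := by
    ext a b
    simp
  simp only [signedMinor, hsub, of_apply, Fin.cons_zero]
  ring

lemma signedMinor_vecMul_eq_zero {n : ℕ} (X : Matrix (Fin (n + 1)) (Fin n) ℝ) :
    signedMinor X ᵥ* X = 0 := by
  ext k
  rw [vecMul, signedMinor_dotProduct_eq_det, Pi.zero_apply]
  exact det_zero_of_column_eq (Fin.succ_ne_zero k).symm fun r => by simp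

theorem nonparametric_HJ_constraints_vanish_general
    (n M : ℕ)
    (L : Matrix (Fin M) (Fin (n + 1)) ℝ → ℝ)
    (P : Matrix (Fin M) (Fin (n + 1)) ℝ)
    (X : Matrix (Fin (n + 1)) (Fin n) ℝ)
    (π : Fin M → ℝ)
    (hπ : ∀ i, π i = ∑ j : Fin (n + 1),
      fderiv ℝ L P (Matrix.single i j 1) * signedMinor X j)
    (H : Fin (n + 1) → ℝ)
    (hH : ∀ j, H j =
      (∑ j' ∈ Finset.univ.erase j,
        (∑ i : Fin M, fderiv ℝ L P (Matrix.single i j' 1) * P i j)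
          * signedMinor X j')
      + ((∑ i : Fin M, fderiv ℝ L P (Matrix.single i j 1) * P i j) - L P)
          * signedMinor X j)
    (k : Fin n) :
    ∑ i : Fin M, π i * (P * X) i k = ∑ j : Fin (n + 1), H j * X j k := by
  set D : Matrix (Fin M) (Fin (n + 1)) ℝ := Matrix.of fun i j => fderiv ℝ L P (Matrix.single i j 1)
  set w := signedMinor X
  have hπ' : π = D *ᵥ w := funext hπ
  have hH' : H = (Dᵀ * P)ᵀ *ᵥ w - L P • w := by
    ext j
    simp only [hH, Pi.sub_apply, Pi.smul_apply, mulVec, dotProduct, transpose_apply, mul_apply,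
      D, of_apply, smul_eq_mul]
    rw [← Finset.sum_erase_add _ _ (Finset.mem_univ j)]
    ring
  change (π ᵥ* (P * X)) k = (H ᵥ* X) k
  rw [hπ', hH', ← vecMul_transpose, mulVec_transpose, sub_vecMul, smul_vecMul,
    signedMinor_vecMul_eq_zero, smul_zero, sub_zero, vecMul_vecMul, vecMul_vecMul,
    Matrix.mul_assoc]

/-- The non-parametric Hamilton–Jacobi constraints vanish identically
on integral elements: with `π_i = Σ_j (∂L/∂P_{ij})(P) · w_j(X)` and
`H_j = Σ_{j'≠j} (Σ_i (∂L/∂P_{ij'})(P) · P_{ij}) · w_{j'}(X)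
      + (Σ_i (∂L/∂P_{ij})(P) · P_{ij} − L(P)) · w_j(X)`,
one has `Σ_i π_i · (P·X)_{ik} = Σ_j H_j · X_{jk}` for every `k`. -/
theorem nonparametric_HJ_constraints_vanish
    (n M : ℕ)
    (L : Matrix (Fin M) (Fin (n + 1)) ℝ → ℝ)
    (hdiff : Differentiable ℝ L)
    (P : Matrix (Fin M) (Fin (n + 1)) ℝ)
    (X : Matrix (Fin (n + 1)) (Fin n) ℝ)
    (π : Fin M → ℝ)
    (hπ : ∀ i, π i = ∑ j : Fin (n + 1),
      fderiv ℝ L P (Matrix.single i j 1) * signedMinor X j)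
    (H : Fin (n + 1) → ℝ)
    (hH : ∀ j, H j =
      (∑ j' ∈ Finset.univ.erase j,
        (∑ i : Fin M, fderiv ℝ L P (Matrix.single i j' 1) * P i j)
          * signedMinor X j')
      + ((∑ i : Fin M, fderiv ℝ L P (Matrix.single i j 1) * P i j) - L P)
          * signedMinor X j)
    (k : Fin n) :
    ∑ i : Fin M, π i * (P * X) i k = ∑ j : Fin (n + 1), H j * X j k :=
  nonparametric_HJ_constraints_vanish_general n M L P X π hπ H hH k
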